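/- For every d×d matrix v = (v^a_b) over K there exists a unique R-linear derivation V : R^𝐝 → R^𝐝 (equivalently, a K-linear derivation vanishing on the image of the structure map R → R^𝐝) such that for every f ∈ R and every multi-index i with |i| ≥ 1: V(f_i) = Σ_{a,b : i(b) ≥ 1} v^a_b · ((i − e_b)(a) + 1) · f_{i − e_b + e_a}. (This is the derivation characterized by Σ_i V(f_i) t^i = Σ_{a,b} v^a_b t^b ∂_{t^a} I(f), the infinitesimal form of the GL_d(K)-action on R^𝐝.) -/

import Mathlib

namespace Paper

/-- Multi-indices: finitely supported functions `Fin d → ℕ`. -/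
abbrev MIdx (d : ℕ) := Fin d →₀ ℕ

/-- The length `|i|` of a multi-index. -/
def deg {d : ℕ} (i : MIdx d) : ℕ := i.sum fun _ n => n

variable (K R : Type) [Field K] [CharZero K] [CommRing R] [Algebra K R]

/-- The defining relations of the algebra `R^𝐝`. -/
def relSet (d : ℕ) : Set (MvPolynomial (R × MIdx d) R) :=
  {p | (∃ f g : R, ∃ i : MIdx d,
          p = MvPolynomial.X (f + g, i) - MvPolynomial.X (f, i) - MvPolynomial.X (g, i)) ∨
       (∃ f g : R, ∃ i : MIdx d,
          p = MvPolynomial.X (f * g, i) -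
            ∑ q ∈ Finset.HasAntidiagonal.antidiagonal i, MvPolynomial.X (f, q.1) * MvPolynomial.X (g, q.2)) ∨
       (∃ f : R, p = MvPolynomial.X (f, (0 : MIdx d)) - MvPolynomial.C f) ∨
       (∃ (c : K) (i : MIdx d), 1 ≤ deg i ∧ p = MvPolynomial.X (algebraMap K R c, i))}

/-- The commutative `R`-algebra `R^𝐝` generated by the symbols `f_i`. -/
def Rd (d : ℕ) : Type :=
  MvPolynomial (R × MIdx d) R ⧸ Ideal.span (relSet K R d)

noncomputable instance (d : ℕ) : CommRing (Rd K R d) := Ideal.Quotient.commRing _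
noncomputable instance (d : ℕ) : Algebra R (Rd K R d) := Ideal.Quotient.algebra R
noncomputable instance (d : ℕ) : Algebra K (Rd K R d) := Ideal.Quotient.algebra K

/-- The generator `f_i` of `R^𝐝`. -/
noncomputable def gen {d : ℕ} (f : R) (i : MIdx d) : Rd K R d :=
  Ideal.Quotient.mk (Ideal.span (relSet K R d)) (MvPolynomial.X (f, i))

/-- The Taylor series `I(f) = Σ_i f_i t^i ∈ R^𝐝[[t^1,…,t^d]]`. -/
noncomputable def Ifun {d : ℕ} (f : R) : MvPowerSeries (Fin d) (Rd K R d) :=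
  fun i => gen K R f i

end Paper

/-!
The relations defining `R^𝐝` say precisely that `I : R → R^𝐝[[t]]` is additive, multiplicative,
and sends `K` to constants, while `f_0` is the image of `f`. Hence for every `R^𝐝`-linear
derivation `D` of `R^𝐝[[t]]` with values in the augmentation ideal, `f_i ↦ coeff_i (D (I f))`
respects the relations and defines an `R`-linear derivation `V` of `R^𝐝` with
`Σ_i V(f_i) t^i = D (I f)`. For `D = Σ_{a,b} v^a_b t^b ∂_a` this is the required `V`. It is unique
because the `f_i` generate `R^𝐝` and the `f_0` lie in the image of `R`.
-/

namespace MvPowerSeries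

variable {σ S : Type*} [CommSemiring S]

noncomputable def linearVectorField [Fintype σ] (v : Matrix σ σ S) :
    Derivation S (MvPowerSeries σ S) (MvPowerSeries σ S) :=
  ∑ a, ∑ c, v a c • (X c : MvPowerSeries σ S) • pderiv S a

theorem linearVectorField_apply [Fintype σ] (v : Matrix σ σ S) (F : MvPowerSeries σ S) :
    linearVectorField v F = ∑ a, ∑ c, v a c • (X c * pderiv S a F) := by
  rw [linearVectorField, ← Derivation.coeFnAddMonoidHom_apply]
  simp only [map_sum, Finset.sum_apply, Derivation.coeFnAddMonoidHom_apply, Derivation.smul_apply,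
    smul_eq_mul]

theorem coeff_X_mul_pderiv (a c : σ) (F : MvPowerSeries σ S) (i : σ →₀ ℕ) :
    coeff i (X c * pderiv S a F) =
      if 1 ≤ i c then
        (((i - Finsupp.single c 1 : σ →₀ ℕ) a + 1 : ℕ) : S) *
          coeff (i - Finsupp.single c 1 + Finsupp.single a 1) F
      else 0 := by
  rw [X_def, coeff_monomial_mul]
  simp only [Finsupp.single_le_iff, one_mul, coeff_pderiv, mul_comm, Nat.cast_add, Nat.cast_one]

theorem coeff_linearVectorField [Fintype σ] (v : Matrix σ σ S) (F : MvPowerSeries σ S)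
    (i : σ →₀ ℕ) :
    coeff i (linearVectorField v F) =
      ∑ a, ∑ c, if 1 ≤ i c then
        v a c * (((i - Finsupp.single c 1 : σ →₀ ℕ) a + 1 : ℕ) : S) *
          coeff (i - Finsupp.single c 1 + Finsupp.single a 1) F
      else 0 := by
  simp only [linearVectorField_apply, map_sum, coeff_smul, coeff_X_mul_pderiv, mul_ite, mul_zero,
    mul_assoc]

theorem constantCoeff_linearVectorField [Fintype σ] (v : Matrix σ σ S) (F : MvPowerSeries σ S) :
    constantCoeff (linearVectorField v F) = 0 := by
  simp [← coeff_zero_eq_constantCoeff_apply, coeff_linearVectorField]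

end MvPowerSeries

namespace Paper

open MvPowerSeries

variable {K R : Type} [Field K] [CommRing R] [Algebra K R] {d : ℕ}

theorem one_le_deg_iff {i : MIdx d} : 1 ≤ deg i ↔ i ≠ 0 :=
  Nat.one_le_iff_ne_zero.trans (Finsupp.degree_eq_zero_iff i).not

theorem mk_eq_zero_of_mem_relSet {p : MvPolynomial (R × MIdx d) R} (hp : p ∈ relSet K R d) :
    Ideal.Quotient.mk (Ideal.span (relSet K R d)) p = 0 :=
  Ideal.Quotient.eq_zero_iff_mem.mpr (Ideal.subset_span hp)

theorem gen_add (f g : R) (i : MIdx d) :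
    gen K R (f + g) i = gen K R f i + gen K R g i := by
  have h := mk_eq_zero_of_mem_relSet (K := K) (Or.inl ⟨f, g, i, rfl⟩)
  rwa [map_sub, map_sub, sub_sub, sub_eq_zero] at h

theorem gen_mul (f g : R) (i : MIdx d) :
    gen K R (f * g) i =
      ∑ q ∈ Finset.HasAntidiagonal.antidiagonal i, gen K R f q.1 * gen K R g q.2 := by
  have h := mk_eq_zero_of_mem_relSet (K := K) (Or.inr (Or.inl ⟨f, g, i, rfl⟩))
  rwa [map_sub, map_sum, sub_eq_zero] at h

theorem gen_zero (f : R) : gen K R f (0 : MIdx d) = algebraMap R (Rd K R d) f := by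
  have h := mk_eq_zero_of_mem_relSet (K := K) (d := d) (Or.inr (Or.inr (Or.inl ⟨f, rfl⟩)))
  rwa [map_sub, sub_eq_zero] at h

theorem gen_algebraMap (c : K) {i : MIdx d} (hi : i ≠ 0) :
    gen K R (algebraMap K R c) i = 0 :=
  mk_eq_zero_of_mem_relSet (Or.inr (Or.inr (Or.inr ⟨c, i, one_le_deg_iff.mpr hi, rfl⟩)))

theorem coeff_Ifun (f : R) (i : MIdx d) : coeff i (Ifun K R f) = gen K R f i :=
  rfl

theorem Ifun_add (f g : R) :
    Ifun K R (f + g) = (Ifun K R f + Ifun K R g : MvPowerSeries (Fin d) _) := by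
  ext i
  simp only [map_add, coeff_Ifun, gen_add]

theorem Ifun_mul (f g : R) :
    Ifun K R (f * g) = (Ifun K R f * Ifun K R g : MvPowerSeries (Fin d) _) := by
  ext i
  simp only [coeff_mul, coeff_Ifun, gen_mul]

theorem Ifun_algebraMap (c : K) :
    Ifun K R (algebraMap K R c) =
      (C (algebraMap R (Rd K R d) (algebraMap K R c)) : MvPowerSeries (Fin d) _) := by
  ext i
  rw [coeff_Ifun, coeff_C]
  split_ifs with hi
  · rw [hi, gen_zero]
  · exact gen_algebraMap c hi

noncomputable instance : Algebra (MvPolynomial (R × MIdx d) R) (Rd K R d) :=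
  Ideal.Quotient.algebra _

instance : IsScalarTower R (MvPolynomial (R × MIdx d) R) (Rd K R d) :=
  Ideal.Quotient.isScalarTower _ _ _

theorem algebraMap_X (f : R) (i : MIdx d) :
    algebraMap (MvPolynomial (R × MIdx d) R) (Rd K R d) (MvPolynomial.X (f, i)) = gen K R f i :=
  rfl

variable (D : Derivation (Rd K R d) (MvPowerSeries (Fin d) (Rd K R d))
  (MvPowerSeries (Fin d) (Rd K R d)))

noncomputable def polySeriesDerivation : Derivation R (MvPolynomial (R × MIdx d) R) (Rd K R d) :=
  MvPolynomial.mkDerivation R fun p => coeff p.2 (D (Ifun K R p.1))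

theorem polySeriesDerivation_X (f : R) (i : MIdx d) :
    polySeriesDerivation D (MvPolynomial.X (f, i)) = coeff i (D (Ifun K R f)) :=
  MvPolynomial.mkDerivation_X _ _ _

theorem polySeriesDerivation_eq_zero_of_mem_relSet (hD : ∀ F, constantCoeff (D F) = 0)
    {p : MvPolynomial (R × MIdx d) R} (hp : p ∈ relSet K R d) :
    polySeriesDerivation D p = 0 := by
  rcases hp with ⟨f, g, i, rfl⟩ | ⟨f, g, i, rfl⟩ | ⟨f, rfl⟩ | ⟨c, i, -, rfl⟩
  · simp only [map_sub, polySeriesDerivation_X, Ifun_add, map_add, sub_sub, sub_self]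
  · rw [map_sub, sub_eq_zero, polySeriesDerivation_X, Ifun_mul, Derivation.leibniz, map_sum,
      smul_eq_mul, smul_eq_mul, mul_comm (Ifun K R g), map_add, coeff_mul, coeff_mul,
      ← Finset.sum_add_distrib]
    refine Finset.sum_congr rfl fun q _ => ?_
    rw [Derivation.leibniz, polySeriesDerivation_X, polySeriesDerivation_X, Algebra.smul_def,
      Algebra.smul_def, algebraMap_X, algebraMap_X, coeff_Ifun, coeff_Ifun, mul_comm (coeff q.1 _)]
  · rw [map_sub, polySeriesDerivation_X, coeff_zero_eq_constantCoeff_apply, hD,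
      ← MvPolynomial.algebraMap_eq, Derivation.map_algebraMap, sub_zero]
  · rw [polySeriesDerivation_X, Ifun_algebraMap]
    exact (congrArg (coeff i) (D.map_algebraMap _)).trans (map_zero _)

theorem polySeriesDerivation_eq_zero_of_mem_span (hD : ∀ F, constantCoeff (D F) = 0)
    {p : MvPolynomial (R × MIdx d) R} (hp : p ∈ Ideal.span (relSet K R d)) :
    polySeriesDerivation D p = 0 := by
  induction hp using Submodule.span_induction with
  | mem p hp => exact polySeriesDerivation_eq_zero_of_mem_relSet D hD hp
  | zero => exact map_zero _
  | add p q _ _ hp hq => rw [map_add, hp, hq, add_zero]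
  | smul t p hp ih =>
    rw [smul_eq_mul, Derivation.leibniz, ih, smul_zero, zero_add, Algebra.smul_def,
      show algebraMap _ (Rd K R d) p = 0 from Ideal.Quotient.eq_zero_iff_mem.mpr hp, zero_mul]

noncomputable def seriesDerivation (hD : ∀ F, constantCoeff (D F) = 0) :
    Derivation R (Rd K R d) (Rd K R d) where
  -- instance search for `Module R (Rd K R d)` fails inside `liftQ`, so it is supplied by hand
  toLinearMap := @Submodule.liftQ R (MvPolynomial (R × MIdx d) R) _ _ _
    ((Ideal.span (relSet K R d)).restrictScalars R) R (Rd K R d) _ _ Algebra.toModule (RingHom.id R)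
    (polySeriesDerivation D).toLinearMap
    fun _ hp => polySeriesDerivation_eq_zero_of_mem_span D hD hp
  map_one_eq_zero' := (polySeriesDerivation D).map_one_eq_zero
  leibniz' x y := by
    obtain ⟨x, rfl⟩ := Ideal.Quotient.mk_surjective x
    obtain ⟨y, rfl⟩ := Ideal.Quotient.mk_surjective y
    exact (polySeriesDerivation D).leibniz x y

theorem seriesDerivation_gen (hD : ∀ F, constantCoeff (D F) = 0) (f : R) (i : MIdx d) :
    seriesDerivation D hD (gen K R f i) = coeff i (D (Ifun K R f)) :=
  polySeriesDerivation_X D f i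

theorem adjoin_range_gen :
    Algebra.adjoin R (Set.range fun p : R × MIdx d => gen K R p.1 p.2) = ⊤ := by
  have hmap := AlgHom.map_adjoin (Ideal.Quotient.mkₐ R (Ideal.span (relSet K R d)))
    (Set.range MvPolynomial.X)
  rw [← Set.range_comp, MvPolynomial.adjoin_range_X, Algebra.map_top,
    (AlgHom.range_eq_top _).mpr (Ideal.Quotient.mkₐ_surjective R _)] at hmap
  exact hmap.symm

theorem derivation_ext_of_gen {V W : Derivation R (Rd K R d) (Rd K R d)}
    (h : ∀ (f : R) (i : MIdx d), 1 ≤ deg i → V (gen K R f i) = W (gen K R f i)) : V = W := by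
  refine Derivation.ext_of_adjoin_eq_top _ adjoin_range_gen ?_
  rintro _ ⟨⟨f, i⟩, rfl⟩
  by_cases hi : i = 0
  · simp only [hi, gen_zero, Derivation.map_algebraMap]
  · exact h f i (one_le_deg_iff.mpr hi)

end Paper

theorem statement7_general (K R : Type) [Field K] [CommRing R] [Algebra K R]
    (d : ℕ) (v : Matrix (Fin d) (Fin d) K) :
    ∃! V : Derivation R (Paper.Rd K R d) (Paper.Rd K R d),
      ∀ (f : R) (i : Paper.MIdx d), 1 ≤ Paper.deg i →
        V (Paper.gen K R f i) =
          ∑ a : Fin d, ∑ c : Fin d,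
            if 1 ≤ i c then
              algebraMap R (Paper.Rd K R d) (algebraMap K R (v a c)) *
                ((((i - Finsupp.single c 1 : Paper.MIdx d) a + 1 : ℕ) : Paper.Rd K R d)) *
                Paper.gen K R f ((i - Finsupp.single c 1 : Paper.MIdx d) + Finsupp.single a 1)
            else 0 := by
  let w := v.map fun x => algebraMap R (Paper.Rd K R d) (algebraMap K R x)
  refine ⟨Paper.seriesDerivation (MvPowerSeries.linearVectorField w)
      (MvPowerSeries.constantCoeff_linearVectorField w),
    fun f i _ => ?_, fun W hW => Paper.derivation_ext_of_gen fun f i hi => ?_⟩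
  · rw [Paper.seriesDerivation_gen, MvPowerSeries.coeff_linearVectorField]
    rfl
  · rw [hW f i hi, Paper.seriesDerivation_gen, MvPowerSeries.coeff_linearVectorField]
    rfl

/-- For every `d×d` matrix `v` over `K` there is a unique
`R`-linear derivation `V` of `R^𝐝` with
`V(f_i) = Σ_{a,b : i(b) ≥ 1} v^a_b ((i−e_b)(a)+1) f_{i−e_b+e_a}`
(the infinitesimal form of the `GL_d(K)`-action on `R^𝐝`). -/
theorem statement7 (K R : Type) [Field K] [CharZero K] [CommRing R] [Algebra K R]
    (d : ℕ) (hd : 1 ≤ d) (v : Matrix (Fin d) (Fin d) K) :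
    ∃! V : Derivation R (Paper.Rd K R d) (Paper.Rd K R d),
      ∀ (f : R) (i : Paper.MIdx d), 1 ≤ Paper.deg i →
        V (Paper.gen K R f i) =
          ∑ a : Fin d, ∑ c : Fin d,
            if 1 ≤ i c then
              algebraMap R (Paper.Rd K R d) (algebraMap K R (v a c)) *
                ((((i - Finsupp.single c 1 : Paper.MIdx d) a + 1 : ℕ) : Paper.Rd K R d)) *
                Paper.gen K R f ((i - Finsupp.single c 1 : Paper.MIdx d) + Finsupp.single a 1)
            else 0 :=
  statement7_general K R d v
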